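/- arXiv:1808.03204 — 10 statements merged into one kernel-verified Lean document; each statement's English description precedes it below -/
import Mathlib

section
/- If ψ is CGF-like on [0, λ_max) with b̄ := sup_{λ} ψ'(λ), then the slope transform s(u) := ψ(ψ*'(u))/ψ*'(u), where ψ* is the Legendre-Fenchel transform of ψ, satisfies 0 < s(u) < u for all u ∈ (0, b̄), and s is continuous and strictly increasing on (0, b̄). -/
/-- Slope transform facts: for a CGF-like `ψ` on `[0, λmax)` with derivative `ψ'`,
and `g = (ψ')⁻¹ = (ψ*)'` (the derivative of the Legendre-Fenchel transform),
the slope transform `s u = ψ (g u) / g u` satisfies `0 < s u < u` for all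
`u ∈ (0, b̄)` (where `u < b̄ := sup ψ'` is expressed as `∃ λ, u < ψ' λ`),
and `s` is continuous and strictly increasing there. -/
theorem slope_transform_facts (lmax : ℝ) (ψ ψ' g : ℝ → ℝ)
    (hconv : StrictConvexOn ℝ (Set.Ico 0 lmax) ψ)
    (hcd : ContDiffOn ℝ 2 ψ (Set.Ico 0 lmax))
    (hderiv : ∀ x ∈ Set.Ico 0 lmax, HasDerivWithinAt ψ (ψ' x) (Set.Ico 0 lmax) x)
    (h0 : ψ 0 = 0) (h0' : ψ' 0 = 0)
    (hsup : ∀ M : ℝ, ∃ x ∈ Set.Ico 0 lmax, M < ψ x)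
    -- `g` is the inverse of `ψ'`, i.e. `ψ*' = (ψ')⁻¹`, on `(0, b̄)`:
    (hg : ∀ u ∈ {u : ℝ | 0 < u ∧ ∃ l ∈ Set.Ico 0 lmax, u < ψ' l},
      g u ∈ Set.Ioo 0 lmax ∧ ψ' (g u) = u) :
    (∀ u ∈ {u : ℝ | 0 < u ∧ ∃ l ∈ Set.Ico 0 lmax, u < ψ' l},
      0 < ψ (g u) / g u ∧ ψ (g u) / g u < u) ∧
    ContinuousOn (fun u => ψ (g u) / g u)
      {u : ℝ | 0 < u ∧ ∃ l ∈ Set.Ico 0 lmax, u < ψ' l} ∧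
    StrictMonoOn (fun u => ψ (g u) / g u)
      {u : ℝ | 0 < u ∧ ∃ l ∈ Set.Ico 0 lmax, u < ψ' l} := by
  have hlmax : 0 < lmax := by
    obtain ⟨x, hx, -⟩ := hsup 0
    exact lt_of_le_of_lt hx.1 hx.2
  have h0mem : (0 : ℝ) ∈ Set.Ico 0 lmax := ⟨le_refl 0, hlmax⟩
  -- strict monotonicity of ψ' on [0, lmax)
  have hmono : StrictMonoOn ψ' (Set.Ico 0 lmax) := by
    intro x hx y hy hxy
    exact (hconv.lt_slope_of_hasDerivWithinAt hx hy hxy (hderiv x hx)).trans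
      (hconv.slope_lt_of_hasDerivWithinAt hx hy hxy (hderiv y hy))
  -- the basic slope inequality: for 0 < λ < lmax, 0 < ψ λ / λ < ψ' λ
  have hslope : ∀ l ∈ Set.Ioo (0 : ℝ) lmax, 0 < ψ l / l ∧ ψ l / l < ψ' l := by
    intro l hl
    have hlS : l ∈ Set.Ico 0 lmax := ⟨hl.1.le, hl.2⟩
    have hlow := hconv.lt_slope_of_hasDerivWithinAt h0mem hlS hl.1 (hderiv 0 h0mem)
    have hhigh := hconv.slope_lt_of_hasDerivWithinAt h0mem hlS hl.1 (hderiv l hlS)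
    simp only [slope_def_field, h0, h0', sub_zero] at hlow hhigh
    exact ⟨hlow, hhigh⟩
  refine ⟨?_, ?_, ?_⟩
  · -- 0 < s u < u
    intro u hu
    obtain ⟨hgmem, hgu⟩ := hg u hu
    obtain ⟨h1, h2⟩ := hslope (g u) hgmem
    exact ⟨h1, lt_of_lt_of_eq h2 hgu⟩
  · -- continuity
    have hgcont : ContinuousOn g
        {u : ℝ | 0 < u ∧ ∃ l ∈ Set.Ico 0 lmax, u < ψ' l} := by
      intro u0 hu0
      obtain ⟨hgmem0, hgu0⟩ := hg u0 hu0
      rw [ContinuousWithinAt]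
      refine tendsto_order.2 ⟨?_, ?_⟩
      · intro b hb
        rcases lt_or_ge b 0 with hb0 | hb0
        · filter_upwards [self_mem_nhdsWithin] with u hu
          exact hb0.trans (hg u hu).1.1
        · -- 0 ≤ b < g u0 < lmax
          have hbS : b ∈ Set.Ico 0 lmax := ⟨hb0, hb.trans hgmem0.2⟩
          have hgS : g u0 ∈ Set.Ico 0 lmax := ⟨hgmem0.1.le, hgmem0.2⟩
          have : ψ' b < u0 := by
            rw [← hgu0]; exact hmono hbS hgS hb
          filter_upwards [(eventually_gt_nhds this).filter_mono nhdsWithin_le_nhds,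
            self_mem_nhdsWithin] with u h1 h2
          have hguS : g u ∈ Set.Ico 0 lmax := ⟨(hg u h2).1.1.le, (hg u h2).1.2⟩
          have : ψ' b < ψ' (g u) := by rw [(hg u h2).2]; exact h1
          exact (hmono.lt_iff_lt hbS hguS).mp this
      · intro b hb
        rcases le_or_gt lmax b with hb0 | hb0
        · filter_upwards [self_mem_nhdsWithin] with u hu
          exact (hg u hu).1.2.trans_le hb0
        · -- g u0 < b < lmax
          have hbS : b ∈ Set.Ico 0 lmax := ⟨hgmem0.1.le.trans hb.le, hb0⟩
          have hgS : g u0 ∈ Set.Ico 0 lmax := ⟨hgmem0.1.le, hgmem0.2⟩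
          have : u0 < ψ' b := by
            rw [← hgu0]; exact hmono hgS hbS hb
          filter_upwards [(eventually_lt_nhds this).filter_mono nhdsWithin_le_nhds,
            self_mem_nhdsWithin] with u h1 h2
          have hguS : g u ∈ Set.Ico 0 lmax := ⟨(hg u h2).1.1.le, (hg u h2).1.2⟩
          have : ψ' (g u) < ψ' b := by rw [(hg u h2).2]; exact h1
          exact (hmono.lt_iff_lt hguS hbS).mp this
    have hmaps : Set.MapsTo g {u : ℝ | 0 < u ∧ ∃ l ∈ Set.Ico 0 lmax, u < ψ' l}
        (Set.Ico 0 lmax) := fun u hu => ⟨(hg u hu).1.1.le, (hg u hu).1.2⟩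
    exact (hcd.continuousOn.comp hgcont hmaps).div hgcont
      (fun u hu => (hg u hu).1.1.ne')
  · -- strict monotonicity
    intro u hu v hv huv
    obtain ⟨hgmemu, hguu⟩ := hg u hu
    obtain ⟨hgmemv, hgvv⟩ := hg v hv
    have hguS : g u ∈ Set.Ico 0 lmax := ⟨hgmemu.1.le, hgmemu.2⟩
    have hgvS : g v ∈ Set.Ico 0 lmax := ⟨hgmemv.1.le, hgmemv.2⟩
    have hlt : g u < g v := by
      refine (hmono.lt_iff_lt hguS hgvS).mp ?_
      rw [hguu, hgvv]; exact huv
    have := hconv.secant_strict_mono h0mem hguS hgvS hgmemu.1.ne' hgmemv.1.ne' hlt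
    simpa [h0] using this
end

section
/- Let (S_t, V_t) be adapted real processes with S_0 = V_0 = 0, V_t ≥ 0. Suppose for each λ ∈ [0, λ_max) there is a supermartingale L_t(λ) with L_0(λ) ≤ l_0 and exp{λ S_t − ψ(λ) V_t} ≤ L_t(λ) a.s. for all t. Then for any a, b > 0, P(∃t: S_t ≥ a + b V_t) ≤ l_0 · exp{−a D(b)}, where D(b) = sup{λ ∈ (0, λ_max): ψ(λ)/λ ≤ b} (with sup ∅ = 0). -/
/-!
For each feasible `λ`, on the event `S t ≥ a + b V t` we have `λ S t - ψ(λ) V t ≥ λ a`, because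
`ψ(λ) ≤ λ b` and `V t ≥ 0`; so the nonnegative supermartingale `L(λ)` dominating
`exp (λ S - ψ(λ) V)` reaches `exp (λ a)`, which by Ville's inequality has probability at most
`l₀ exp (-λ a)`. This bound is continuous in `λ`, hence it also holds at the supremum `D(b)` of
the feasible set.
-/

open MeasureTheory

namespace MeasureTheory

variable {Ω : Type*} {m : MeasurableSpace Ω} {μ : Measure Ω} [IsFiniteMeasure μ]
  {ℱ : Filtration ℕ m} {L : ℕ → Ω → ℝ}

theorem Supermartingale.ville_ineq_finite (hL : Supermartingale L ℱ μ)
    (hnonneg : ∀ t, 0 ≤ᵐ[μ] L t) (ε : ℝ) (n : ℕ) :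
    ε * μ.real {ω | ∃ k ≤ n, ε ≤ L k ω} ≤ ∫ ω, L 0 ω ∂μ := by
  set A := {ω | ∃ k ≤ n, ε ≤ L k ω}
  -- stop at the first time `k ≤ n` at which `L` reaches `ε`
  let τ : Ω → WithTop ℕ := fun ω ↦ (hittingBtwn L {y | ε ≤ y} 0 n ω : ℕ)
  have hτ : IsStoppingTime ℱ τ := hL.1.adapted.isStoppingTime_hittingBtwn measurableSet_Ici
  have hτn : ∀ ω, τ ω ≤ n := fun ω ↦ WithTop.coe_le_coe.2 (hittingBtwn_le ω)
  have hA : MeasurableSet A := by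
    simp only [A, Set.ofPred_exists, Set.ofPred_and]
    exact .iUnion fun k ↦ (MeasurableSet.const _).inter
      (measurableSet_le measurable_const ((hL.stronglyMeasurable k).measurable.le (ℱ.le k)))
  have hint : Integrable (stoppedValue L τ) μ := integrable_stoppedValue ℕ hτ hL.integrable hτn
  have hε_le : ∀ ω ∈ A, ε ≤ stoppedValue L τ ω := fun ω ⟨k, hkn, hk⟩ ↦
    stoppedValue_hittingBtwn_mem ⟨k, ⟨k.zero_le, hkn⟩, hk⟩
  have hτ_nonneg : 0 ≤ᵐ[μ] stoppedValue L τ := by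
    filter_upwards [ae_all_iff.2 hnonneg] with ω hω using hω _
  have hτ_le : ∫ ω, stoppedValue L τ ω ∂μ ≤ ∫ ω, L 0 ω ∂μ := by
    have := hL.neg.expected_stoppedValue_mono (isStoppingTime_const ℱ 0) hτ
      (fun _ ↦ WithTop.coe_le_coe.2 (Nat.zero_le _)) hτn
    simpa [stoppedValue, integral_neg] using this
  calc ε * μ.real A ≤ ∫ ω in A, stoppedValue L τ ω ∂μ :=
        setIntegral_ge_of_const_le_real hA (measure_ne_top μ A) hε_le hint.integrableOn
    _ ≤ ∫ ω, stoppedValue L τ ω ∂μ := setIntegral_le_integral hint hτ_nonneg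
    _ ≤ ∫ ω, L 0 ω ∂μ := hτ_le

theorem Supermartingale.ville_ineq (hL : Supermartingale L ℱ μ)
    (hnonneg : ∀ t, 0 ≤ᵐ[μ] L t) {ε : ℝ} (hε : 0 < ε) :
    μ {ω | ∃ t, ε ≤ L t ω} ≤ ENNReal.ofReal ((∫ ω, L 0 ω ∂μ) / ε) := by
  have hunion : {ω | ∃ t, ε ≤ L t ω} = ⋃ n, {ω | ∃ k ≤ n, ε ≤ L k ω} := by
    ext ω
    simp only [Set.mem_ofPred_eq, Set.mem_iUnion]
    exact ⟨fun ⟨t, ht⟩ ↦ ⟨t, t, le_rfl, ht⟩, fun ⟨_, k, _, hk⟩ ↦ ⟨k, hk⟩⟩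
  have hmono : Monotone fun n ↦ {ω | ∃ k ≤ n, ε ≤ L k ω} :=
    fun _ _ hnm _ ⟨k, hk, h⟩ ↦ ⟨k, hk.trans hnm, h⟩
  rw [hunion, hmono.measure_iUnion]
  refine iSup_le fun n ↦ ?_
  rw [← ofReal_measureReal]
  exact ENNReal.ofReal_le_ofReal <| (le_div_iff₀' hε).2 (hL.ville_ineq_finite hnonneg ε n)

end MeasureTheory

theorem le_apply_csSup_of_forall_le {α β : Type*} [ConditionallyCompleteLinearOrder α]
    [TopologicalSpace α] [OrderTopology α] [TopologicalSpace β] [Preorder β]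
    [OrderClosedTopology β] {s : Set α} (hs : s.Nonempty) (hbdd : BddAbove s) {g : α → β}
    (hg : Continuous g) {c : β} (h : ∀ x ∈ s, c ≤ g x) : c ≤ g (sSup s) :=
  closure_minimal h (isClosed_le continuous_const hg) (csSup_mem_closure hs hbdd)

theorem exp_mul_le_exp_sub_of_add_mul_le {lam ψlam a b s v : ℝ} (hlam : 0 ≤ lam)
    (hψ : ψlam ≤ lam * b) (hv : 0 ≤ v) (hcross : a + b * v ≤ s) :
    Real.exp (lam * a) ≤ Real.exp (lam * s - ψlam * v) := by
  have hdrift : ψlam * v ≤ lam * b * v := mul_le_mul_of_nonneg_right hψ hv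
  have hscaled : lam * (a + b * v) ≤ lam * s := mul_le_mul_of_nonneg_left hcross hlam
  exact Real.exp_le_exp.2 (by linarith)

theorem measure_exists_add_mul_le_le {Ω : Type*} {m : MeasurableSpace Ω}
    {μ : Measure Ω} [IsProbabilityMeasure μ] {ℱ : Filtration ℕ m} {S V L : ℕ → Ω → ℝ}
    {lam ψlam l0 a b : ℝ} (hL : Supermartingale L ℱ μ) (hL0 : ∀ᵐ ω ∂μ, L 0 ω ≤ l0)
    (hexp : ∀ t, ∀ᵐ ω ∂μ, Real.exp (lam * S t ω - ψlam * V t ω) ≤ L t ω)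
    (hlam : 0 ≤ lam) (hψ : ψlam ≤ lam * b) (hV : ∀ t ω, 0 ≤ V t ω) :
    μ {ω | ∃ t, a + b * V t ω ≤ S t ω} ≤ ENNReal.ofReal (l0 * Real.exp (-(a * lam))) := by
  have hnonneg : ∀ t, 0 ≤ᵐ[μ] L t := fun t ↦
    (hexp t).mono fun _ h ↦ (Real.exp_nonneg _).trans h
  have hcross :
      {ω | ∃ t, a + b * V t ω ≤ S t ω} ≤ᵐ[μ] {ω | ∃ t, Real.exp (lam * a) ≤ L t ω} := by
    filter_upwards [ae_all_iff.2 hexp] with ω hω ⟨t, ht⟩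
    exact ⟨t, (exp_mul_le_exp_sub_of_add_mul_le hlam hψ (hV t ω) ht).trans (hω t)⟩
  have hint : ∫ ω, L 0 ω ∂μ ≤ l0 := by
    simpa using integral_mono_ae (hL.integrable 0) (integrable_const l0) hL0
  calc μ {ω | ∃ t, a + b * V t ω ≤ S t ω}
      ≤ μ {ω | ∃ t, Real.exp (lam * a) ≤ L t ω} := measure_mono_ae hcross
    _ ≤ ENNReal.ofReal ((∫ ω, L 0 ω ∂μ) / Real.exp (lam * a)) :=
        hL.ville_ineq hnonneg (Real.exp_pos _)
    _ ≤ ENNReal.ofReal (l0 * Real.exp (-(a * lam))) := by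
        rw [div_eq_mul_inv, ← Real.exp_neg, mul_comm lam]
        gcongr

theorem uniform_chernoff_line_crossing_general {Ω : Type*} {m : MeasurableSpace Ω}
    {μ : Measure Ω} [IsProbabilityMeasure μ]
    (ℱ : Filtration ℕ m) (S V : ℕ → Ω → ℝ) (ψ : ℝ → ℝ) (lmax l0 : ℝ)
    (hl0 : 1 ≤ l0)
    (hVnonneg : ∀ t ω, 0 ≤ V t ω)
    (hsub : ∀ lam ∈ Set.Ico 0 lmax, ∃ L : ℕ → Ω → ℝ,
      Supermartingale L ℱ μ ∧ (∀ᵐ ω ∂μ, L 0 ω ≤ l0) ∧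
      ∀ t, ∀ᵐ ω ∂μ, Real.exp (lam * S t ω - ψ lam * V t ω) ≤ L t ω)
    (a b : ℝ) :
    μ {ω | ∃ t, a + b * V t ω ≤ S t ω}
      ≤ ENNReal.ofReal
          (l0 * Real.exp (-(a * sSup {l : ℝ | l ∈ Set.Ioo 0 lmax ∧ ψ l / l ≤ b}))) := by
  set D := {l : ℝ | l ∈ Set.Ioo 0 lmax ∧ ψ l / l ≤ b}
  rcases D.eq_empty_or_nonempty with hD | hD
  · rw [hD, Real.sSup_empty, mul_zero, neg_zero, Real.exp_zero, mul_one]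
    exact prob_le_one.trans (ENNReal.one_le_ofReal.2 hl0)
  · refine le_apply_csSup_of_forall_le hD ⟨lmax, fun _ hl ↦ hl.1.2.le⟩
      (g := fun l ↦ ENNReal.ofReal (l0 * Real.exp (-(a * l))))
      (ENNReal.continuous_ofReal.comp (by fun_prop)) ?_
    rintro lam ⟨⟨hlam, hlam_lt⟩, hψ⟩
    obtain ⟨L, hL, hL0, hexp⟩ := hsub lam ⟨hlam.le, hlam_lt⟩
    exact measure_exists_add_mul_le_le hL hL0 hexp hlam.le
      (by rwa [div_le_iff₀' hlam] at hψ) hVnonneg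

/-- Time-uniform Chernoff bound (master theorem, part (a)): if `(S t)` is
`l₀`-sub-ψ with variance process `(V t)`, then for any `a, b > 0`,
`P(∃ t, S t ≥ a + b V t) ≤ l₀ exp(−a D(b))`, where
`D b = sSup {λ ∈ (0, λmax) : ψ λ / λ ≤ b}` (with `sSup ∅ = 0`). -/
theorem uniform_chernoff_line_crossing {Ω : Type*} {m : MeasurableSpace Ω}
    {μ : Measure Ω} [IsProbabilityMeasure μ]
    (ℱ : Filtration ℕ m) (S V : ℕ → Ω → ℝ) (ψ : ℝ → ℝ) (lmax l0 : ℝ)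
    (hl0 : 1 ≤ l0)
    (hS : Adapted ℱ S) (hV : Adapted ℱ V)
    (hS0 : ∀ ω, S 0 ω = 0) (hV0 : ∀ ω, V 0 ω = 0)
    (hVnonneg : ∀ t ω, 0 ≤ V t ω)
    (hsub : ∀ lam ∈ Set.Ico 0 lmax, ∃ L : ℕ → Ω → ℝ,
      Supermartingale L ℱ μ ∧ (∀ᵐ ω ∂μ, L 0 ω ≤ l0) ∧
      ∀ t, ∀ᵐ ω ∂μ, Real.exp (lam * S t ω - ψ lam * V t ω) ≤ L t ω)
    (a b : ℝ) (ha : 0 < a) (hb : 0 < b) :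
    μ {ω | ∃ t, a + b * V t ω ≤ S t ω}
      ≤ ENNReal.ofReal
          (l0 * Real.exp (-(a * sSup {l : ℝ | l ∈ Set.Ioo 0 lmax ∧ ψ l / l ≤ b}))) :=
  uniform_chernoff_line_crossing_general ℱ S V ψ lmax l0 hl0 hVnonneg hsub a b
end

section
/- Under the same sub-ψ assumption with ψ CGF-like, for any m > 0 and x ∈ (0, m·b̄): P(∃t: S_t ≥ x + s(x/m)·(V_t − m)) ≤ l_0 · exp{−m ψ*(x/m)}, where s is the slope transform and ψ* is the Legendre-Fenchel transform of ψ. -/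
/-!
Take `λ = g (x/m)`, so that `ψ' λ = x/m` and `λ > 0`. Multiplying the crossing condition by `λ`,
the line `x + (ψ λ / λ) (V t - m)` is crossed exactly when `λ S t - ψ λ V t ≥ λ x - ψ λ m`, which
forces the nonnegative supermartingale `L` dominating `exp (λ S - ψ λ V)` to reach
`exp (λ x - ψ λ m)`; Ville's inequality bounds the probability of that by
`l₀ exp (-(λ x - ψ λ m))`. Finally, by convexity `ψ` lies above its tangent at `λ`, whose slope is
`x/m`, so `λ` attains the supremum defining `ψ* (x/m)` and `λ x - ψ λ m = m ψ* (x/m)`.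
-/

open MeasureTheory Set

theorem ConvexOn.add_mul_sub_le_of_hasDerivWithinAt {s : Set ℝ} {f : ℝ → ℝ} {a u l : ℝ}
    (hf : ConvexOn ℝ s f) (ha : a ∈ s) (hl : l ∈ s) (hderiv : HasDerivWithinAt f u s a) :
    f a + u * (l - a) ≤ f l := by
  rcases lt_trichotomy l a with hla | rfl | hal
  · have hslope := hf.slope_le_of_hasDerivWithinAt hl ha hla hderiv
    rw [slope_def_field, div_le_iff₀ (sub_pos.2 hla)] at hslope
    linarith
  · simp
  · have hslope := hf.le_slope_of_hasDerivWithinAt ha hl hal hderiv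
    rw [slope_def_field, le_div_iff₀ (sub_pos.2 hal)] at hslope
    linarith

theorem ConvexOn.sSup_image_mul_sub_eq_of_hasDerivWithinAt {s : Set ℝ} {f : ℝ → ℝ} {a u : ℝ}
    (hf : ConvexOn ℝ s f) (ha : a ∈ s) (hderiv : HasDerivWithinAt f u s a) :
    sSup ((fun l => l * u - f l) '' s) = a * u - f a := by
  refine IsGreatest.csSup_eq ⟨⟨a, ha, rfl⟩, ?_⟩
  rintro _ ⟨l, hl, rfl⟩
  linarith [hf.add_mul_sub_le_of_hasDerivWithinAt ha hl hderiv]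

namespace MeasureTheory.Supermartingale

variable {Ω : Type*} {m0 : MeasurableSpace Ω} {μ : Measure Ω} {ℱ : Filtration ℕ m0}
  {L : ℕ → Ω → ℝ}

theorem integral_stoppedValue_le_integral_zero [IsFiniteMeasure μ] (hL : Supermartingale L ℱ μ)
    {τ : Ω → ℕ∞} (hτ : IsStoppingTime ℱ τ) {N : ℕ} (hbdd : ∀ ω, τ ω ≤ N) :
    ∫ ω, stoppedValue L τ ω ∂μ ≤ ∫ ω, L 0 ω ∂μ := by
  have h := hL.neg.expected_stoppedValue_mono (isStoppingTime_const ℱ 0) hτ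
    (fun _ => bot_le) hbdd
  simp only [stoppedValue, Pi.neg_apply, integral_neg, neg_le_neg_iff] at h
  exact h

theorem mul_measureReal_exists_le_le_integral [IsFiniteMeasure μ] (hL : Supermartingale L ℱ μ)
    (hnonneg : ∀ t, 0 ≤ᵐ[μ] L t) (ε : ℝ) (n : ℕ) :
    ε * μ.real {ω | ∃ k ≤ n, ε ≤ L k ω} ≤ ∫ ω, L 0 ω ∂μ := by
  set τ : Ω → ℕ∞ := fun ω => (hittingBtwn L (Ici ε) 0 n ω : ℕ)
  have hτ : IsStoppingTime ℱ τ := hL.1.adapted.isStoppingTime_hittingBtwn measurableSet_Ici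
  have hτ_le : ∀ ω, τ ω ≤ n := fun ω => WithTop.coe_le_coe.2 (hittingBtwn_le ω)
  have hint : Integrable (stoppedValue L τ) μ := integrable_stoppedValue ℕ hτ hL.integrable hτ_le
  have hA : MeasurableSet {ω | ∃ k ≤ n, ε ≤ L k ω} := by
    have hunion : {ω | ∃ k ≤ n, ε ≤ L k ω} = ⋃ k ∈ Iic n, {ω | ε ≤ L k ω} := by ext; simp
    rw [hunion]
    exact .biUnion (to_countable _) fun k _ =>
      measurableSet_le measurable_const ((hL.1 k).measurable.le (ℱ.le k))
  have hstopped_ge : ∀ ω ∈ {ω | ∃ k ≤ n, ε ≤ L k ω}, ε ≤ stoppedValue L τ ω := by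
    rintro ω ⟨k, hk, hεk⟩
    exact stoppedValue_hittingBtwn_mem ⟨k, ⟨Nat.zero_le _, hk⟩, hεk⟩
  have hstopped_nonneg : 0 ≤ᵐ[μ] stoppedValue L τ := by
    filter_upwards [ae_all_iff.2 hnonneg] with ω hω using hω _
  calc ε * μ.real {ω | ∃ k ≤ n, ε ≤ L k ω}
      ≤ ∫ ω in {ω | ∃ k ≤ n, ε ≤ L k ω}, stoppedValue L τ ω ∂μ :=
        setIntegral_ge_of_const_le_real hA (measure_ne_top _ _) hstopped_ge hint.integrableOn
    _ ≤ ∫ ω, stoppedValue L τ ω ∂μ := setIntegral_le_integral hint hstopped_nonneg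
    _ ≤ ∫ ω, L 0 ω ∂μ := hL.integral_stoppedValue_le_integral_zero hτ hτ_le

/-- Ville's inequality. -/
theorem measure_exists_le_le [IsFiniteMeasure μ] (hL : Supermartingale L ℱ μ)
    (hnonneg : ∀ t, 0 ≤ᵐ[μ] L t) {ε : ℝ} (hε : 0 < ε) :
    μ {ω | ∃ t, ε ≤ L t ω} ≤ ENNReal.ofReal ((∫ ω, L 0 ω ∂μ) / ε) := by
  have hunion : {ω | ∃ t, ε ≤ L t ω} = ⋃ n, {ω | ∃ k ≤ n, ε ≤ L k ω} := by
    ext ω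
    simp only [mem_ofPred_eq, mem_iUnion]
    exact ⟨fun ⟨t, ht⟩ => ⟨t, t, le_rfl, ht⟩, fun ⟨_, k, _, hk⟩ => ⟨k, hk⟩⟩
  have hmono : Monotone fun n => {ω | ∃ k ≤ n, ε ≤ L k ω} :=
    fun _ _ hij _ ⟨k, hk, h⟩ => ⟨k, hk.trans hij, h⟩
  rw [hunion, hmono.measure_iUnion]
  refine iSup_le fun n => ?_
  rw [← ofReal_measureReal]
  refine ENNReal.ofReal_le_ofReal ((le_div_iff₀ hε).2 ?_)
  linarith [hL.mul_measureReal_exists_le_le_integral hnonneg ε n]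

theorem measure_exists_le_of_exp_le [IsProbabilityMeasure μ] (hL : Supermartingale L ℱ μ)
    {X : ℕ → Ω → ℝ} {l0 : ℝ} (hL0 : ∀ᵐ ω ∂μ, L 0 ω ≤ l0)
    (hdom : ∀ t, ∀ᵐ ω ∂μ, Real.exp (X t ω) ≤ L t ω) (a : ℝ) :
    μ {ω | ∃ t, a ≤ X t ω} ≤ ENNReal.ofReal (l0 * Real.exp (-a)) := by
  have hnonneg : ∀ t, 0 ≤ᵐ[μ] L t := fun t => by
    filter_upwards [hdom t] with ω hω using (Real.exp_pos _).le.trans hω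
  have hsubset : {ω | ∃ t, a ≤ X t ω} ≤ᵐ[μ] {ω | ∃ t, Real.exp a ≤ L t ω} := by
    filter_upwards [ae_all_iff.2 hdom] with ω hω ⟨t, ht⟩
    exact ⟨t, (Real.exp_le_exp.2 ht).trans (hω t)⟩
  have hL0_int : ∫ ω, L 0 ω ∂μ ≤ l0 := by
    simpa using integral_mono_ae (hL.integrable 0) (integrable_const l0) hL0
  calc μ {ω | ∃ t, a ≤ X t ω}
      ≤ μ {ω | ∃ t, Real.exp a ≤ L t ω} := measure_mono_ae hsubset
    _ ≤ ENNReal.ofReal ((∫ ω, L 0 ω ∂μ) / Real.exp a) :=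
        hL.measure_exists_le_le hnonneg (Real.exp_pos a)
    _ ≤ ENNReal.ofReal (l0 * Real.exp (-a)) := by
        rw [Real.exp_neg, ← div_eq_mul_inv]
        exact ENNReal.ofReal_le_ofReal (div_le_div_of_nonneg_right hL0_int (Real.exp_pos a).le)

end MeasureTheory.Supermartingale

theorem uniform_chernoff_optimized_general {Ω : Type*} {m' : MeasurableSpace Ω}
    {μ : Measure Ω} [IsProbabilityMeasure μ]
    (ℱ : Filtration ℕ m') (S V : ℕ → Ω → ℝ) (ψ ψ' g : ℝ → ℝ) (lmax l0 : ℝ)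
    (hsub : ∀ lam ∈ Set.Ico 0 lmax, ∃ L : ℕ → Ω → ℝ,
      Supermartingale L ℱ μ ∧ (∀ᵐ ω ∂μ, L 0 ω ≤ l0) ∧
      ∀ t, ∀ᵐ ω ∂μ, Real.exp (lam * S t ω - ψ lam * V t ω) ≤ L t ω)
    -- ψ is CGF-like:
    (hconv : StrictConvexOn ℝ (Set.Ico 0 lmax) ψ)
    (hderiv : ∀ y ∈ Set.Ico 0 lmax, HasDerivWithinAt ψ (ψ' y) (Set.Ico 0 lmax) y)
    (x m : ℝ) (hm : 0 < m)
    -- `g (x/m) = (ψ*)'(x/m) = (ψ')⁻¹(x/m)`: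
    (hg : g (x / m) ∈ Set.Ioo 0 lmax ∧ ψ' (g (x / m)) = x / m) :
    μ {ω | ∃ t, x + (ψ (g (x / m)) / g (x / m)) * (V t ω - m) ≤ S t ω}
      ≤ ENNReal.ofReal
          (l0 * Real.exp
            (-(m * sSup ((fun l => l * (x / m) - ψ l) '' Set.Ico 0 lmax)))) := by
  obtain ⟨⟨hlam_pos, hlam_lt⟩, hψ'lam⟩ := hg
  set lam := g (x / m)
  have hlam : lam ∈ Ico 0 lmax := ⟨hlam_pos.le, hlam_lt⟩
  obtain ⟨L, hL, hL0, hdom⟩ := hsub lam hlam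
  have hψstar : sSup ((fun l => l * (x / m) - ψ l) '' Ico 0 lmax) = lam * (x / m) - ψ lam :=
    hconv.convexOn.sSup_image_mul_sub_eq_of_hasDerivWithinAt hlam (hψ'lam ▸ hderiv lam hlam)
  have hcrossing : {ω | ∃ t, x + (ψ lam / lam) * (V t ω - m) ≤ S t ω} ⊆
      {ω | ∃ t, lam * x - ψ lam * m ≤ lam * S t ω - ψ lam * V t ω} := by
    rintro ω ⟨t, ht⟩
    refine ⟨t, ?_⟩
    have hscaled := mul_le_mul_of_nonneg_left ht hlam_pos.le
    have hexpand : lam * (x + ψ lam / lam * (V t ω - m)) = lam * x + ψ lam * (V t ω - m) := by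
      field_simp
    linarith
  calc μ {ω | ∃ t, x + (ψ lam / lam) * (V t ω - m) ≤ S t ω}
      ≤ μ {ω | ∃ t, lam * x - ψ lam * m ≤ lam * S t ω - ψ lam * V t ω} := measure_mono hcrossing
    _ ≤ ENNReal.ofReal (l0 * Real.exp (-(lam * x - ψ lam * m))) :=
        hL.measure_exists_le_of_exp_le hL0 hdom _
    _ = _ := by
        rw [hψstar, mul_sub, mul_left_comm, mul_div_cancel₀ _ hm.ne']
        ring_nf

/-- Time-uniform Chernoff bound (master theorem, part (b)): if `(S t)` is
`l₀`-sub-ψ with variance process `(V t)` and `ψ` is CGF-like, then for any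
`m > 0` and `x ∈ (0, m b̄)`,
`P(∃ t, S t ≥ x + s(x/m) (V t − m)) ≤ l₀ exp(−m ψ*(x/m))`, where
`s u = ψ((ψ*)'(u)) / (ψ*)'(u)` is the slope transform (with
`(ψ*)' = (ψ')⁻¹ =: g`) and `ψ* u = sup_{λ ∈ [0,λmax)} (λ u − ψ λ)` is the
Legendre-Fenchel transform of `ψ`. -/
theorem uniform_chernoff_optimized {Ω : Type*} {m' : MeasurableSpace Ω}
    {μ : Measure Ω} [IsProbabilityMeasure μ]
    (ℱ : Filtration ℕ m') (S V : ℕ → Ω → ℝ) (ψ ψ' g : ℝ → ℝ) (lmax l0 : ℝ)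
    (hl0 : 1 ≤ l0)
    (hS : Adapted ℱ S) (hV : Adapted ℱ V)
    (hS0 : ∀ ω, S 0 ω = 0) (hV0 : ∀ ω, V 0 ω = 0)
    (hVnonneg : ∀ t ω, 0 ≤ V t ω)
    (hsub : ∀ lam ∈ Set.Ico 0 lmax, ∃ L : ℕ → Ω → ℝ,
      Supermartingale L ℱ μ ∧ (∀ᵐ ω ∂μ, L 0 ω ≤ l0) ∧
      ∀ t, ∀ᵐ ω ∂μ, Real.exp (lam * S t ω - ψ lam * V t ω) ≤ L t ω)
    -- ψ is CGF-like:
    (hconv : StrictConvexOn ℝ (Set.Ico 0 lmax) ψ)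
    (hcd : ContDiffOn ℝ 2 ψ (Set.Ico 0 lmax))
    (hderiv : ∀ y ∈ Set.Ico 0 lmax, HasDerivWithinAt ψ (ψ' y) (Set.Ico 0 lmax) y)
    (h0 : ψ 0 = 0) (h0' : ψ' 0 = 0)
    (hsupψ : ∀ M : ℝ, ∃ y ∈ Set.Ico 0 lmax, M < ψ y)
    (x m : ℝ) (hm : 0 < m) (hx : 0 < x)
    -- `x < m b̄`, i.e. `x/m < b̄ = sup ψ'`:
    (hxb : ∃ l ∈ Set.Ico 0 lmax, x / m < ψ' l)
    -- `g (x/m) = (ψ*)'(x/m) = (ψ')⁻¹(x/m)`: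
    (hg : g (x / m) ∈ Set.Ioo 0 lmax ∧ ψ' (g (x / m)) = x / m) :
    μ {ω | ∃ t, x + (ψ (g (x / m)) / g (x / m)) * (V t ω - m) ≤ S t ω}
      ≤ ENNReal.ofReal
          (l0 * Real.exp
            (-(m * sSup ((fun l => l * (x / m) - ψ l) '' Set.Ico 0 lmax)))) :=
  uniform_chernoff_optimized_general ℱ S V ψ ψ' g lmax l0 hsub hconv hderiv x m hm hg
end

section
/- For the sub-gamma function ψ_{G,c}(λ) = λ²/(2(1−cλ)) on [0, 1/(c∨0)) with c ∈ ℝ: the Legendre-Fenchel transform is ψ_G*(u) = u²/(1 + cu + √(1+2cu)), the slope transform is s_G(u) = u/(1 + √(1+2cu)), and the decay transform is D_G(u) = 2u/(1+2cu). -/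
/-!
On `{λ ≥ 0, cλ < 1}` the function `λ ↦ λv − ψ_G(λ)` falls short of `2v²/(s+1)²`, with
`s = √(1 + 2cv)`, by the square `(s(s+1)λ − 2v)²` over a positive denominator, so the conjugate is
attained at `λ* = 2v/(s(s+1))` and equals `v²/(1 + cv + s)` since `(s+1)² = 2(1 + cv + s)`. By the
envelope theorem `(ψ_G*)' = λ*`, and `1 − cλ* = 1/s` makes `ψ_G(λ*)/λ* = λ*s/2` explicit. The
condition `ψ_G(λ)/λ ≤ u` is linear in `λ`, so the decay set is the interval `(0, 2u/(1+2cu)]`.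
-/

/-- The sub-gamma function with scale `c`: `ψ_G λ = λ²/(2(1−cλ))` on the domain
`{λ : 0 ≤ λ ∧ cλ < 1}` (which is `[0, 1/(c⊔0))`). -/
noncomputable def psiG (c l : ℝ) : ℝ := l ^ 2 / (2 * (1 - c * l))

open Real Set

theorem psiG_div_self (c l : ℝ) : psiG c l / l = l / (2 * (1 - c * l)) := by
  rw [psiG, div_div, mul_comm, ← div_div, pow_two, mul_self_div_self]

noncomputable def psiGMaximizer (c v : ℝ) : ℝ :=
  2 * v / (√(1 + 2 * c * v) * (√(1 + 2 * c * v) + 1))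

section Maximizer

variable {c v : ℝ}

theorem one_sub_mul_psiGMaximizer (h : 0 < 1 + 2 * c * v) :
    1 - c * psiGMaximizer c v = 1 / √(1 + 2 * c * v) := by
  have hs : 0 < √(1 + 2 * c * v) := sqrt_pos.2 h
  have hs2 : √(1 + 2 * c * v) ^ 2 = 1 + 2 * c * v := sq_sqrt h.le
  rw [psiGMaximizer]
  set s := √(1 + 2 * c * v)
  field_simp
  linear_combination hs2

theorem psiGMaximizer_mem (hv : 0 ≤ v) (h : 0 < 1 + 2 * c * v) :
    psiGMaximizer c v ∈ {l : ℝ | 0 ≤ l ∧ c * l < 1} := by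
  have hs : 0 < √(1 + 2 * c * v) := sqrt_pos.2 h
  have hcl := one_sub_mul_psiGMaximizer h
  refine ⟨by unfold psiGMaximizer; positivity, ?_⟩
  have : 0 < 1 / √(1 + 2 * c * v) := by positivity
  linarith

theorem mul_sub_psiG_le {s l : ℝ} (hs : 0 ≤ s) (hs2 : s ^ 2 = 1 + 2 * c * v) (hl : c * l < 1) :
    l * v - psiG c l ≤ 2 * v ^ 2 / (s + 1) ^ 2 := by
  have h1 : 0 < 2 * (1 - c * l) := by linarith
  have heq : l * v - psiG c l = (2 * l * v * (1 - c * l) - l ^ 2) / (2 * (1 - c * l)) := by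
    rw [psiG, eq_div_iff h1.ne', sub_mul, div_mul_cancel₀ _ h1.ne']; ring
  rw [heq, div_le_div_iff₀ h1 (by positivity), ← sub_nonneg]
  have key : 2 * v ^ 2 * (2 * (1 - c * l)) - (2 * l * v * (1 - c * l) - l ^ 2) * (s + 1) ^ 2
      = (s * (s + 1) * l - 2 * v) ^ 2 := by
    linear_combination (-l ^ 2 * s ^ 2 - 2 * l ^ 2 * s + 2 * v * l - l ^ 2) * hs2
  rw [key]
  positivity

theorem mul_sub_psiG_psiGMaximizer (h : 0 < 1 + 2 * c * v) :
    psiGMaximizer c v * v - psiG c (psiGMaximizer c v)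
      = 2 * v ^ 2 / (√(1 + 2 * c * v) + 1) ^ 2 := by
  have hs : 0 < √(1 + 2 * c * v) := sqrt_pos.2 h
  rw [psiG, one_sub_mul_psiGMaximizer h, psiGMaximizer]
  set s := √(1 + 2 * c * v)
  field_simp
  ring

theorem isGreatest_legendre_psiG (hv : 0 ≤ v) (h : 0 < 1 + 2 * c * v) :
    IsGreatest ((fun l => l * v - psiG c l) '' {l : ℝ | 0 ≤ l ∧ c * l < 1})
      (2 * v ^ 2 / (√(1 + 2 * c * v) + 1) ^ 2) := by
  refine ⟨⟨_, psiGMaximizer_mem hv h, mul_sub_psiG_psiGMaximizer h⟩, ?_⟩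
  rintro _ ⟨l, ⟨-, hl⟩, rfl⟩
  exact mul_sub_psiG_le (sqrt_nonneg _) (sq_sqrt h.le) hl

theorem hasDerivAt_legendre_psiG (h : 0 < 1 + 2 * c * v) :
    HasDerivAt (fun w => 2 * w ^ 2 / (√(1 + 2 * c * w) + 1) ^ 2) (psiGMaximizer c v) v := by
  have hs : 0 < √(1 + 2 * c * v) := sqrt_pos.2 h
  have hsqrt : HasDerivAt (fun w => √(1 + 2 * c * w)) (2 * c / (2 * √(1 + 2 * c * v))) v := by
    refine HasDerivAt.sqrt ?_ h.ne'
    simpa using ((hasDerivAt_id v).const_mul (2 * c)).const_add 1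
  have hden : HasDerivAt (fun w => (√(1 + 2 * c * w) + 1) ^ 2)
      (2 * (√(1 + 2 * c * v) + 1) ^ 1 * (2 * c / (2 * √(1 + 2 * c * v)))) v :=
    (hsqrt.add_const 1).pow 2
  have hnum : HasDerivAt (fun w : ℝ => 2 * w ^ 2) (2 * (2 * v ^ 1)) v :=
    (hasDerivAt_pow 2 v).const_mul 2
  refine (hnum.div hden (by positivity)).congr_deriv ?_
  have hs2 : √(1 + 2 * c * v) ^ 2 = 1 + 2 * c * v := sq_sqrt h.le
  rw [psiGMaximizer]
  set s := √(1 + 2 * c * v)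
  field_simp
  linear_combination v * hs2

theorem psiG_psiGMaximizer_div (h : 0 < 1 + 2 * c * v) :
    psiG c (psiGMaximizer c v) / psiGMaximizer c v = v / (1 + √(1 + 2 * c * v)) := by
  have hs : 0 < √(1 + 2 * c * v) := sqrt_pos.2 h
  rw [psiG_div_self, one_sub_mul_psiGMaximizer h, psiGMaximizer]
  set s := √(1 + 2 * c * v)
  field_simp
  ring

end Maximizer

theorem psiG_div_self_le_iff_mem_Ioc {c u l : ℝ} (hc : 0 ≤ c) (hu : 0 ≤ u) :
    0 < l ∧ c * l < 1 ∧ psiG c l / l ≤ u ↔ l ∈ Ioc 0 (2 * u / (1 + 2 * c * u)) := by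
  have hpos : 0 < 1 + 2 * c * u := by positivity
  rw [mem_Ioc, le_div_iff₀ hpos, psiG_div_self]
  constructor
  · rintro ⟨hl0, hl1, hle⟩
    rw [div_le_iff₀ (by linarith)] at hle
    exact ⟨hl0, by linarith⟩
  · rintro ⟨hl0, hle⟩
    have hl1 : c * l < 1 := by nlinarith [mul_le_mul_of_nonneg_left hle hc]
    refine ⟨hl0, hl1, ?_⟩
    rw [div_le_iff₀ (by linarith)]
    linarith

/-- Transforms of the sub-gamma function `ψ_{G,c}` (with `c ≥ 0`): the
Legendre-Fenchel transform is `ψ_G* u = u²/(1 + cu + √(1+2cu))`, the slope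
transform `s_G u = ψ_G((ψ_G*)'(u)) / (ψ_G*)'(u) = u/(1 + √(1+2cu))`, and the
decay transform `D_G u = sup {λ ∈ dom, λ > 0 : ψ_G λ / λ ≤ u} = 2u/(1+2cu)`. -/
theorem gamma_transforms (c u : ℝ) (hc : 0 ≤ c) (hu : 0 < u) :
    sSup ((fun l => l * u - psiG c l) '' {l : ℝ | 0 ≤ l ∧ c * l < 1})
      = u ^ 2 / (1 + c * u + Real.sqrt (1 + 2 * c * u)) ∧
    psiG c (deriv (fun v =>
          sSup ((fun l => l * v - psiG c l) '' {l : ℝ | 0 ≤ l ∧ c * l < 1})) u) /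
        deriv (fun v =>
          sSup ((fun l => l * v - psiG c l) '' {l : ℝ | 0 ≤ l ∧ c * l < 1})) u
      = u / (1 + Real.sqrt (1 + 2 * c * u)) ∧
    sSup {l : ℝ | 0 < l ∧ c * l < 1 ∧ psiG c l / l ≤ u} = 2 * u / (1 + 2 * c * u) := by
  have hpos : ∀ v, 0 < v → 0 < 1 + 2 * c * v := fun v hv => by positivity
  have hconj : (fun v => sSup ((fun l => l * v - psiG c l) '' {l : ℝ | 0 ≤ l ∧ c * l < 1}))
      =ᶠ[nhds u] fun v => 2 * v ^ 2 / (√(1 + 2 * c * v) + 1) ^ 2 := by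
    filter_upwards [Ioi_mem_nhds hu] with v hv
    exact (isGreatest_legendre_psiG (le_of_lt hv) (hpos v hv)).csSup_eq
  refine ⟨?_, ?_, ?_⟩
  · rw [hconj.eq_of_nhds]
    have hs2 : √(1 + 2 * c * u) ^ 2 = 1 + 2 * c * u := sq_sqrt (hpos u hu).le
    rw [show 1 + c * u + √(1 + 2 * c * u) = (√(1 + 2 * c * u) + 1) ^ 2 / 2 by
      linear_combination -hs2 / 2, div_div_eq_mul_div]
    ring
  · rw [hconj.deriv_eq, (hasDerivAt_legendre_psiG (hpos u hu)).deriv,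
      psiG_psiGMaximizer_div (hpos u hu)]
  · rw [show {l : ℝ | 0 < l ∧ c * l < 1 ∧ psiG c l / l ≤ u} = Ioc 0 (2 * u / (1 + 2 * c * u))
      from ext fun l => psiG_div_self_le_iff_mem_Ioc hc hu.le]
    exact csSup_Ioc (by positivity)
end

section
/- For c > 0 and all λ ∈ [0, 3/c): (e^{cλ} − cλ − 1)/c² ≤ λ²/(2(1 − cλ/3)); i.e., any sub-Poisson process with scale c is sub-gamma with scale c/3 and the same variance process. -/
/-!
With `x = c λ` the claim reads `(1 - x / 3) (eˣ - x - 1) ≤ x² / 2`. The gap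
`x² / 2 - (1 - x / 3) (eˣ - x - 1)` has second derivative `(1 - (1 - x) eˣ) / 3 ≥ 0`, since
`1 - x ≤ e⁻ˣ`, and it vanishes together with its derivative at `0`; a convex function is
minimal at a critical point, so the gap is nonnegative on all of `ℝ`.
-/

open Real Set

theorem one_sub_mul_exp_le_one (x : ℝ) : (1 - x) * exp x ≤ 1 :=
  calc (1 - x) * exp x ≤ exp (-x) * exp x := by gcongr; exact one_sub_le_exp_neg x
    _ = 1 := by rw [← exp_add, neg_add_cancel, exp_zero]

theorem one_sub_div_three_mul_exp_sub_sub_one_le (x : ℝ) :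
    (1 - x / 3) * (exp x - x - 1) ≤ x ^ 2 / 2 := by
  let f : ℝ → ℝ := fun x ↦ x ^ 2 / 2 - (1 - x / 3) * (exp x - x - 1)
  let f' : ℝ → ℝ := fun x ↦ x + (exp x - x - 1) / 3 - (1 - x / 3) * (exp x - 1)
  have hf (x : ℝ) : HasDerivAt f (f' x) x :=
    (((hasDerivAt_pow 2 x).div_const 2).fun_sub
      (((hasDerivAt_id' x).div_const 3).const_sub 1 |>.fun_mul
        (((hasDerivAt_exp x).fun_sub (hasDerivAt_id' x)).sub_const 1))).congr_deriv (by ring)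
  have hf' (x : ℝ) : HasDerivAt f' ((1 - (1 - x) * exp x) / 3) x :=
    (((hasDerivAt_id' x).fun_add
      ((((hasDerivAt_exp x).fun_sub (hasDerivAt_id' x)).sub_const 1).div_const 3)).fun_sub
      (((hasDerivAt_id' x).div_const 3).const_sub 1 |>.fun_mul
        ((hasDerivAt_exp x).sub_const 1))).congr_deriv (by ring)
  have hconvex : ConvexOn ℝ univ f := by
    refine convexOn_of_hasDerivWithinAt2_nonneg convex_univ
      (fun y _ ↦ (hf y).continuousAt.continuousWithinAt) (fun y _ ↦ (hf y).hasDerivWithinAt)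
      (fun y _ ↦ (hf' y).hasDerivWithinAt) fun y _ ↦ ?_
    linarith [one_sub_mul_exp_le_one y]
  have hcrit : derivWithin f (Ioi 0) 0 = 0 := by
    rw [(hf 0).hasDerivWithinAt.derivWithin (uniqueDiffWithinAt_Ioi 0)]
    simp [f']
  have hmin := hconvex.isMinOn_of_rightDeriv_eq_zero (by simp) hcrit (mem_univ x)
  norm_num [f] at hmin
  linarith

theorem subPoisson_le_subGamma_general (c l : ℝ) (hc : 0 < c) (hl : l < 3 / c) :
    (Real.exp (c * l) - c * l - 1) / c ^ 2 ≤ l ^ 2 / (2 * (1 - c * l / 3)) := by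
  have hcl : c * l < 3 := by rwa [lt_div_iff₀' hc] at hl
  rw [div_le_div_iff₀ (by positivity) (by linarith)]
  linear_combination 2 * one_sub_div_three_mul_exp_sub_sub_one_le (c * l)

/-- For `c > 0` and all `λ ∈ [0, 3/c)`:
`(e^{cλ} − cλ − 1)/c² ≤ λ²/(2(1 − cλ/3))`; i.e. `ψ_{P,c} ≤ ψ_{G,c/3}`, so any
sub-Poisson process with scale `c` is sub-gamma with scale `c/3` and the same
variance process. -/
theorem subPoisson_le_subGamma (c l : ℝ) (hc : 0 < c) (hl0 : 0 ≤ l) (hl : l < 3 / c) :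
    (Real.exp (c * l) - c * l - 1) / c ^ 2 ≤ l ^ 2 / (2 * (1 - c * l / 3)) :=
  subPoisson_le_subGamma_general c l hc hl
end

section
/- For g, h > 0, the Bernoulli function ψ_{B,g,h}(λ) := (1/(gh))·log((g e^{hλ} + h e^{−gλ})/(g+h)) satisfies ψ_{B,g,h}(λ) ≤ ((g+h)²/(4gh))·(λ²/2) for all λ ≥ 0 (Hoeffding's lemma in CGF form). -/
/-!
The ratio `(g e^{hλ} + h e^{-gλ}) / (g + h)` is the moment generating function at `λ` of the
centred law giving mass `h / (g + h)` to `-g` and `g / (g + h)` to `h`. This law lives on an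
interval of length `g + h`, so Hoeffding's lemma bounds it by `exp ((g + h)² λ² / 8)`.
-/

open Real MeasureTheory ProbabilityTheory unitInterval

section BernoulliMeasure

variable {X : Type*} [MeasurableSpace X] {x y : X}

lemma mgf_bernoulliMeasure [MeasurableSingletonClass X] (f : X → ℝ) (p : I) (t : ℝ) :
    mgf f Ber(x, y, p) t = p * exp (t * f x) + (1 - p) * exp (t * f y) := by
  simp [mgf, integral_bernoulliMeasure]

lemma ae_mem_bernoulliMeasure {s : Set X} (hs : MeasurableSet s) (hx : x ∈ s) (hy : y ∈ s)
    (p : I) : ∀ᵐ z ∂Ber(x, y, p), z ∈ s := by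
  rw [ae_iff]
  exact bernoulliMeasure_apply_of_notMem_of_notMem p hs.compl (by simpa) (by simpa)

end BernoulliMeasure

lemma mix_exp_le_of_mean_eq_zero {x y : ℝ} (hxy : x ≤ y) (p : I)
    (hmean : p * x + (1 - p) * y = 0) (t : ℝ) :
    p * exp (t * x) + (1 - p) * exp (t * y) ≤ exp (((y - x) / 2) ^ 2 * t ^ 2 / 2) := by
  have hcentred : ∫ z, id z ∂Ber(x, y, p) = 0 := by
    simpa [integral_bernoulliMeasure] using hmean
  have hsubgaussian := hasSubgaussianMGF_of_mem_Icc_of_integral_eq_zero aemeasurable_id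
    (ae_mem_bernoulliMeasure measurableSet_Icc ⟨le_rfl, hxy⟩ ⟨hxy, le_rfl⟩ p) hcentred
  calc p * exp (t * x) + (1 - p) * exp (t * y) = mgf id Ber(x, y, p) t :=
        (mgf_bernoulliMeasure id p t).symm
    _ ≤ exp (((y - x) / 2) ^ 2 * t ^ 2 / 2) := by
      convert hsubgaussian.mgf_le t using 4
      simp [abs_of_nonneg (sub_nonneg.2 hxy)]

theorem bernoulli_le_hoeffding_general (g h l : ℝ) (hg : 0 < g) (hh : 0 < h) :
    1 / (g * h) * Real.log ((g * Real.exp (h * l) + h * Real.exp (-(g * l))) / (g + h))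
      ≤ (g + h) ^ 2 / (4 * g * h) * (l ^ 2 / 2) := by
  have hgh : 0 < g + h := by positivity
  let p : I := ⟨h / (g + h), by positivity, (div_le_one hgh).2 (by linarith)⟩
  have hp : (1 : ℝ) - p = g / (g + h) := by simp only [p]; field_simp; ring
  have hmean : p * -g + (1 - p) * h = 0 := by rw [hp]; simp only [p]; field_simp; ring
  have hmix : (g * exp (h * l) + h * exp (-(g * l))) / (g + h)
      = p * exp (l * -g) + (1 - p) * exp (l * h) := by
    rw [hp]; simp only [p]; field_simp; ring_nf
  have hbound := mix_exp_le_of_mean_eq_zero (by linarith) p hmean l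
  rw [← hmix, ← log_le_iff_le_exp (by positivity)] at hbound
  calc 1 / (g * h) * log ((g * exp (h * l) + h * exp (-(g * l))) / (g + h))
      ≤ 1 / (g * h) * (((h - -g) / 2) ^ 2 * l ^ 2 / 2) := by gcongr
    _ = (g + h) ^ 2 / (4 * g * h) * (l ^ 2 / 2) := by field_simp; ring

/-- Hoeffding's lemma in CGF form: for `g, h > 0`, the Bernoulli function
`ψ_{B,g,h} λ = (1/(gh)) log((g e^{hλ} + h e^{−gλ})/(g+h))` satisfies
`ψ_{B,g,h} λ ≤ ((g+h)²/(4gh)) · λ²/2` for all `λ ≥ 0`. -/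
theorem bernoulli_le_hoeffding (g h l : ℝ) (hg : 0 < g) (hh : 0 < h) (hl : 0 ≤ l) :
    1 / (g * h) * Real.log ((g * Real.exp (h * l) + h * Real.exp (-(g * l))) / (g + h))
      ≤ (g + h) ^ 2 / (4 * g * h) * (l ^ 2 / 2) :=
  bernoulli_le_hoeffding_general g h l hg hh
end

section
/- For g > 0, h > 0, the function h ↦ ψ_{B,g,h}(λ) is nondecreasing for each fixed λ ≥ 0, and ψ_{B,g,h}(λ) ↓ ψ_{P,−g}(λ) = (e^{−gλ} + gλ − 1)/g² as h ↓ 0. Consequently, for c < 0, ψ_{P,c}(λ) ≤ ψ_{B,−c,h}(λ) for every h > 0 and all λ ≥ 0. -/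
/-!
Multiplying numerator and denominator by `e^{gλ}` turns the derivative
`ψ_{B,g,h}'(λ) = (e^{hλ} - e^{-gλ}) / (g e^{hλ} + h e^{-gλ})` into `x / (g x + 1)` with
`x = (e^{(g+h)λ} - 1) / (g+h)`. By convexity of `exp` the secant slope `x` grows with `h`,
and `x ↦ x / (g x + 1)` is increasing, so `ψ_{B,g,h₂} - ψ_{B,g,h₁}` is nondecreasing on
`[0, ∞)` and vanishes at `0`. The limit as `h ↓ 0` is a difference quotient in `h`:
`ψ_{B,g,h}(λ) = (F h - F 0) / h` with `F h = g⁻¹ log ((g e^{hλ} + h e^{-gλ}) / (g + h))`.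
The last claim is the limit of the monotone bound as `h ↓ 0`, with `g = -c`.
-/

open Filter

/-- The Bernoulli potential `ψ_{B,g,h}`. -/
noncomputable def psiB (g h l : ℝ) : ℝ :=
  1 / (g * h) * Real.log ((g * Real.exp (h * l) + h * Real.exp (-(g * l))) / (g + h))

open Real

noncomputable def expSecant (s t : ℝ) : ℝ := (exp (s * t) - 1) / s

lemma expSecant_nonneg {s t : ℝ} (hs : 0 < s) (ht : 0 ≤ t) : 0 ≤ expSecant s t :=
  div_nonneg (sub_nonneg.2 (one_le_exp (by positivity))) hs.le

lemma expSecant_mono {s s' t : ℝ} (hs : 0 < s) (hss' : s ≤ s') (ht : 0 ≤ t) :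
    expSecant s t ≤ expSecant s' t := by
  rcases ht.eq_or_lt with rfl | ht
  · simp [expSecant]
  have hslope := convexOn_exp.secant_mono (a := 0) (Set.mem_univ _) (Set.mem_univ (s * t))
    (Set.mem_univ (s' * t)) (by positivity) (by nlinarith) (by nlinarith)
  simp only [exp_zero, sub_zero] at hslope
  have hscale {r : ℝ} (hr : 0 < r) : expSecant r t = t * ((exp (r * t) - 1) / (r * t)) := by
    unfold expSecant; field_simp
  rw [hscale hs, hscale (hs.trans_le hss')]
  exact mul_le_mul_of_nonneg_left hslope ht.le

lemma div_mul_add_one_mono {g x y : ℝ} (hg : 0 ≤ g) (hx : 0 ≤ x) (hxy : x ≤ y) :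
    x / (g * x + 1) ≤ y / (g * y + 1) := by
  rw [div_le_div_iff₀ (by positivity) (by nlinarith)]
  linarith

lemma hasDerivAt_psiB {g h : ℝ} (hg : 0 < g) (hh : 0 < h) (t : ℝ) :
    HasDerivAt (psiB g h)
      (expSecant (g + h) t / (g * expSecant (g + h) t + 1)) t := by
  have hN : HasDerivAt (fun l => g * exp (h * l) + h * exp (-(g * l)))
      (g * (exp (h * t) * h) + h * (exp (-(g * t)) * -g)) t := by
    have hlin (c : ℝ) : HasDerivAt (fun l => c * l) c t := by
      simpa using (hasDerivAt_id t).const_mul c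
    exact ((hlin h).exp.const_mul g).add ((hlin g).neg.exp.const_mul h)
  refine ((hN.div_const (g + h)).log (by positivity) |>.const_mul (1 / (g * h))).congr_deriv ?_
  have hE := exp_pos (g * t)
  have hH := exp_pos (h * t)
  have hsplit : exp ((g + h) * t) = exp (g * t) * exp (h * t) := by rw [← exp_add]; ring_nf
  have hD : g * (exp (h * t) * exp (g * t) - 1) + (g + h) ≠ 0 := by nlinarith [mul_pos hE hH]
  rw [expSecant, hsplit, mul_comm (exp (g * t)), exp_neg]
  field_simp
  ring

lemma psiB_zero_right (g h : ℝ) : psiB g h 0 = 0 := by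
  rcases eq_or_ne (g + h) 0 with hgh | hgh <;> simp [psiB, hgh]

lemma psiB_le_psiB_of_le {g h₁ h₂ l : ℝ} (hg : 0 < g) (hh₁ : 0 < h₁) (h₁₂ : h₁ ≤ h₂)
    (hl : 0 ≤ l) : psiB g h₁ l ≤ psiB g h₂ l := by
  have hh₂ : 0 < h₂ := hh₁.trans_le h₁₂
  have hderiv t := (hasDerivAt_psiB hg hh₂ t).sub (hasDerivAt_psiB hg hh₁ t)
  have hmono : MonotoneOn (fun t => psiB g h₂ t - psiB g h₁ t) (Set.Ici 0) := by
    refine monotoneOn_of_hasDerivWithinAt_nonneg (convex_Ici 0)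
      (fun t _ => (hderiv t).continuousAt.continuousWithinAt)
      (fun t _ => (hderiv t).hasDerivWithinAt) fun t ht => ?_
    rw [interior_Ici, Set.mem_Ioi] at ht
    exact sub_nonneg.2 <| div_mul_add_one_mono hg.le (expSecant_nonneg (by positivity) ht.le)
      (expSecant_mono (by positivity) (by linarith) ht.le)
  simpa [psiB_zero_right] using hmono Set.self_mem_Ici hl hl

lemma hasDerivAt_log_psiB_argument_at_zero {g : ℝ} (hg : g ≠ 0) (l : ℝ) :
    HasDerivAt (fun h => log ((g * exp (h * l) + h * exp (-(g * l))) / (g + h)))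
      ((exp (-(g * l)) + g * l - 1) / g) 0 := by
  have hN : HasDerivAt (fun h => g * exp (h * l) + h * exp (-(g * l)))
      (g * l + exp (-(g * l))) 0 := by
    refine ((((hasDerivAt_id 0).mul_const l).exp.const_mul g).add
      ((hasDerivAt_id 0).mul_const (exp (-(g * l))))).congr_deriv ?_
    simp
  have hD : HasDerivAt (fun h : ℝ => g + h) 1 0 := (hasDerivAt_id 0).const_add g
  refine ((hN.div hD (by simpa using hg)).log (by simpa using hg)).congr_deriv ?_
  simp only [Pi.div_apply, zero_mul, exp_zero, add_zero]
  field_simp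
  ring

lemma tendsto_psiB_nhdsGT_zero {g : ℝ} (hg : g ≠ 0) (l : ℝ) :
    Tendsto (fun h => psiB g h l) (nhdsWithin 0 (Set.Ioi 0))
      (nhds ((exp (-(g * l)) + g * l - 1) / g ^ 2)) := by
  have hslope := (hasDerivAt_iff_tendsto_slope.mp
    (hasDerivAt_log_psiB_argument_at_zero hg l)).mono_left (nhdsGT_le_nhdsNE 0)
  convert (hslope.const_mul g⁻¹).congr' ?_ using 2
  · field_simp
  · filter_upwards [self_mem_nhdsWithin] with h (hh : 0 < h)
    simp only [slope_def_field, psiB, zero_mul, exp_zero, mul_one, add_zero, div_self hg, log_one,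
      sub_zero]
    field_simp

/-- For `g > 0` and fixed `λ ≥ 0`, `h ↦ ψ_{B,g,h}(λ)` is nondecreasing on
`(0,∞)`, and `ψ_{B,g,h}(λ) ↓ ψ_{P,−g}(λ) = (e^{−gλ} + gλ − 1)/g²` as `h ↓ 0`.
Consequently for `c < 0`, `ψ_{P,c}(λ) ≤ ψ_{B,−c,h}(λ)` for every `h > 0` and
all `λ ≥ 0`. -/
theorem psiB_mono_in_h_and_limit (g : ℝ) (hg : 0 < g) :
    (∀ l : ℝ, 0 ≤ l → ∀ h₁ h₂ : ℝ, 0 < h₁ → h₁ ≤ h₂ → psiB g h₁ l ≤ psiB g h₂ l) ∧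
    (∀ l : ℝ, 0 ≤ l →
      Tendsto (fun h => psiB g h l) (nhdsWithin 0 (Set.Ioi 0))
        (nhds ((Real.exp (-(g * l)) + g * l - 1) / g ^ 2))) ∧
    (∀ c : ℝ, c < 0 → ∀ h : ℝ, 0 < h → ∀ l : ℝ, 0 ≤ l →
      (Real.exp (c * l) - c * l - 1) / c ^ 2 ≤ psiB (-c) h l) := by
  refine ⟨fun l hl h₁ h₂ hh₁ h₁₂ => psiB_le_psiB_of_le hg hh₁ h₁₂ hl,
    fun l _ => tendsto_psiB_nhdsGT_zero hg.ne' l, fun c hc h hh l hl => ?_⟩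
  have hbound : ∀ᶠ x in nhdsWithin 0 (Set.Ioi 0), psiB (-c) x l ≤ psiB (-c) h l := by
    filter_upwards [Ioo_mem_nhdsGT hh] with x hx
    exact psiB_le_psiB_of_le (neg_pos.2 hc) hx.1 hx.2.le hl
  have hlim := le_of_tendsto (tendsto_psiB_nhdsGT_zero (neg_ne_zero.2 hc.ne) l) hbound
  rwa [neg_mul, neg_neg, neg_sq, ← sub_eq_add_neg] at hlim
end

section
/- For c < 0 and all λ ≥ 0 in the common domain: λ²/(2(1−cλ)) ≤ (e^{2cλ} − 2cλ − 1)/(2c)²; i.e., ψ_{G,c} ≤ ψ_{P,2c} when c < 0. -/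
/-! With `t = -cλ ≥ 0`, clearing denominators turns the claim into `1 - t ≤ (1 + t) e^{-2t}`.
This is trivial for `t ≥ 1`; for `t < 1` it says `2t ≤ log (1 + t) - log (1 - t) = 2 artanh t`,
which holds because the power series of `artanh` has nonnegative coefficients. -/

open Real

lemma two_mul_le_log_one_add_sub_log_one_sub {t : ℝ} (ht₀ : 0 ≤ t) (ht₁ : t < 1) :
    2 * t ≤ log (1 + t) - log (1 - t) := by
  have hsum := hasSum_log_sub_log_of_abs_lt_one (abs_lt.mpr ⟨by linarith, ht₁⟩)
  simpa using le_hasSum hsum 0 fun k _ => by positivity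

lemma one_sub_le_one_add_mul_exp_neg_two_mul {t : ℝ} (ht : 0 ≤ t) :
    1 - t ≤ (1 + t) * exp (-2 * t) := by
  rcases le_or_gt 1 t with ht₁ | ht₁
  · nlinarith [exp_pos (-2 * t)]
  have hexp : exp (2 * t) ≤ (1 + t) / (1 - t) := by
    calc exp (2 * t) ≤ exp (log (1 + t) - log (1 - t)) :=
          exp_le_exp.mpr (two_mul_le_log_one_add_sub_log_one_sub ht ht₁)
      _ = (1 + t) / (1 - t) := by
          rw [exp_sub, exp_log (by linarith), exp_log (by linarith)]
  rw [le_div_iff₀ (by linarith)] at hexp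
  rw [neg_mul, exp_neg, ← div_eq_mul_inv, le_div_iff₀ (exp_pos _)]
  linarith

/-- For `c < 0` and all `λ ≥ 0`:
`ψ_{G,c} λ = λ²/(2(1−cλ)) ≤ (e^{2cλ} − 2cλ − 1)/(2c)² = ψ_{P,2c} λ`. -/
theorem subGamma_le_subPoisson_neg (c l : ℝ) (hc : c < 0) (hl : 0 ≤ l) :
    l ^ 2 / (2 * (1 - c * l)) ≤ (Real.exp (2 * c * l) - 2 * c * l - 1) / (2 * c) ^ 2 := by
  have hcl : c * l ≤ 0 := mul_nonpos_of_nonpos_of_nonneg hc.le hl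
  have key := one_sub_le_one_add_mul_exp_neg_two_mul (neg_nonneg.mpr hcl)
  rw [show -2 * -(c * l) = 2 * c * l by ring] at key
  rw [div_le_div_iff₀ (by linarith) (by have := hc.ne; positivity)]
  linear_combination 2 * key
end

section
/- exp(x − x²/2) ≤ 1 + x + (max(−x,0))³/3 for all real x; consequently, for any random variable X with E X = 0 and E|X|³ < ∞, E exp{λX − (λ²/2)X²} ≤ exp{(λ³/3)·E(max(−X,0))³} for all λ ≥ 0. -/
/-!
Everything rests on `(1 - x) exp (x - x²/2) ≤ exp (-x) exp (x - x²/2) = exp (-x²/2) ≤ 1`.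
It makes the derivative of `1 + x - exp (x - x²/2)` nonnegative, which gives the bound for
`x ≥ 0` and the reverse bound `1 + x ≤ exp (x - x²/2)` for `x ≤ 0`; the latter makes
`1 + x - x³/3 - exp (x - x²/2)` antitone on `x ≤ 0`, which is the bound for `x ≤ 0`.
Substituting `x = λX`, integrating and using `E X = 0` and `1 + y ≤ exp y` gives the
moment bound.
-/

open MeasureTheory Real

lemma one_sub_mul_exp_sub_sq_half_le_one (x : ℝ) : (1 - x) * exp (x - x ^ 2 / 2) ≤ 1 := by
  calc (1 - x) * exp (x - x ^ 2 / 2) ≤ exp (-x) * exp (x - x ^ 2 / 2) := by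
        gcongr; linarith [add_one_le_exp (-x)]
    _ = exp (-(x ^ 2 / 2)) := by rw [← exp_add]; ring_nf
    _ ≤ 1 := exp_le_one_iff.2 (by linarith [sq_nonneg x])

lemma hasDerivAt_exp_sub_sq_half (x : ℝ) :
    HasDerivAt (fun x => exp (x - x ^ 2 / 2)) ((1 - x) * exp (x - x ^ 2 / 2)) x := by
  convert ((hasDerivAt_id' x).fun_sub ((hasDerivAt_pow 2 x).div_const 2)).exp using 1
  ring

lemma monotone_one_add_sub_exp_sub_sq_half :
    Monotone fun x : ℝ => 1 + x - exp (x - x ^ 2 / 2) :=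
  monotone_of_hasDerivAt_nonneg
    (fun x => ((hasDerivAt_id' x).const_add 1).fun_sub (hasDerivAt_exp_sub_sq_half x))
    (fun x => sub_nonneg.2 (one_sub_mul_exp_sub_sq_half_le_one x))

lemma exp_sub_sq_half_le_one_add {x : ℝ} (hx : 0 ≤ x) : exp (x - x ^ 2 / 2) ≤ 1 + x := by
  simpa using monotone_one_add_sub_exp_sub_sq_half hx

lemma one_add_le_exp_sub_sq_half {x : ℝ} (hx : x ≤ 0) : 1 + x ≤ exp (x - x ^ 2 / 2) := by
  simpa using monotone_one_add_sub_exp_sub_sq_half hx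

/-- The derivative of the difference factors as `(1 - x) (1 + x - exp (x - x²/2))`. -/
lemma exp_sub_sq_half_le_of_nonpos {x : ℝ} (hx : x ≤ 0) :
    exp (x - x ^ 2 / 2) ≤ 1 + x - x ^ 3 / 3 := by
  have hanti : AntitoneOn (fun x : ℝ => 1 + x - x ^ 3 / 3 - exp (x - x ^ 2 / 2)) (Set.Iic 0) := by
    refine antitoneOn_of_hasDerivWithinAt_nonpos (convex_Iic 0) (by fun_prop)
      (f' := fun x => (1 - x) * (1 + x - exp (x - x ^ 2 / 2))) (fun x _ => ?_) (fun x hx => ?_)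
    · refine HasDerivAt.hasDerivWithinAt ?_
      convert (((hasDerivAt_id' x).const_add 1).fun_sub ((hasDerivAt_pow 3 x).div_const 3)).fun_sub
        (hasDerivAt_exp_sub_sq_half x) using 1
      push_cast; ring
    · rw [interior_Iic] at hx
      exact mul_nonpos_of_nonneg_of_nonpos (by linarith [hx.out])
        (sub_nonpos.2 (one_add_le_exp_sub_sq_half hx.out.le))
  simpa using hanti hx (Set.mem_Iic.2 le_rfl) hx

lemma exp_sub_sq_half_le (x : ℝ) : exp (x - x ^ 2 / 2) ≤ 1 + x + max (-x) 0 ^ 3 / 3 := by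
  rcases le_total 0 x with hx | hx
  · simpa [max_eq_right (neg_nonpos.2 hx)] using exp_sub_sq_half_le_one_add hx
  · rw [max_eq_left (neg_nonneg.2 hx)]
    linarith [exp_sub_sq_half_le_of_nonpos hx, Odd.neg_pow (by decide : Odd 3) x]

lemma exp_mul_sub_sq_half_le {lam : ℝ} (hlam : 0 ≤ lam) (y : ℝ) :
    exp (lam * y - lam ^ 2 / 2 * y ^ 2) ≤ 1 + lam * y + lam ^ 3 / 3 * max (-y) 0 ^ 3 := by
  have h := exp_sub_sq_half_le (lam * y)
  rw [← mul_neg, ← mul_zero lam, ← mul_max_of_nonneg _ _ hlam] at h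
  convert h using 2 <;> ring

section Integral

variable {Ω : Type*} {mΩ : MeasurableSpace Ω} {μ : Measure Ω} {X : Ω → ℝ}

/-- `λy - λ²y²/2 ≤ 1/2`, so the integrand is bounded. -/
lemma integrable_exp_mul_sub_sq_half [IsFiniteMeasure μ] (hX : AEStronglyMeasurable X μ)
    (lam : ℝ) : Integrable (fun ω => exp (lam * X ω - lam ^ 2 / 2 * X ω ^ 2)) μ := by
  refine Integrable.of_bound (C := exp (1 / 2)) (by fun_prop) (ae_of_all _ fun ω => ?_)
  rw [norm_of_nonneg (exp_pos _).le, exp_le_exp]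
  nlinarith [sq_nonneg (lam * X ω - 1)]

lemma integrable_negPart_pow_three (hX : AEStronglyMeasurable X μ)
    (hX3 : Integrable (fun ω => |X ω| ^ 3) μ) : Integrable (fun ω => max (-X ω) 0 ^ 3) μ := by
  refine hX3.mono' (by fun_prop) (ae_of_all _ fun ω => ?_)
  have h0 : 0 ≤ max (-X ω) 0 := le_max_right _ _
  rw [norm_of_nonneg (pow_nonneg h0 3)]
  exact pow_le_pow_left₀ h0 (max_le (neg_le_abs _) (abs_nonneg _)) 3

lemma integral_exp_mul_sub_sq_half_le [IsProbabilityMeasure μ] (hX : Integrable X μ)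
    (hX3 : Integrable (fun ω => max (-X ω) 0 ^ 3) μ) (hmean : ∫ ω, X ω ∂μ = 0)
    {lam : ℝ} (hlam : 0 ≤ lam) :
    ∫ ω, exp (lam * X ω - lam ^ 2 / 2 * X ω ^ 2) ∂μ ≤
      1 + lam ^ 3 / 3 * ∫ ω, max (-X ω) 0 ^ 3 ∂μ := by
  have hlin : Integrable (fun ω => 1 + lam * X ω) μ := (integrable_const 1).add (hX.const_mul lam)
  calc ∫ ω, exp (lam * X ω - lam ^ 2 / 2 * X ω ^ 2) ∂μ
      ≤ ∫ ω, (1 + lam * X ω + lam ^ 3 / 3 * max (-X ω) 0 ^ 3) ∂μ :=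
        integral_mono (integrable_exp_mul_sub_sq_half hX.1 lam) (hlin.add (hX3.const_mul _))
          fun ω => exp_mul_sub_sq_half_le hlam (X ω)
    _ = 1 + lam ^ 3 / 3 * ∫ ω, max (-X ω) 0 ^ 3 ∂μ := by
        rw [integral_add hlin (hX3.const_mul _), integral_add (integrable_const 1) (hX.const_mul lam),
          integral_const_mul, integral_const_mul, hmean]
        simp

end Integral

/-- Fan's cubic inequality: `exp(x − x²/2) ≤ 1 + x + x₋³/3` for all real `x`
(where `x₋ = max(−x,0)`); consequently, for a mean-zero random variable `X`
with `E|X|³ < ∞`, `E exp(λX − (λ²/2)X²) ≤ exp((λ³/3) E X₋³)` for all `λ ≥ 0`. -/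
theorem fan_cubic_inequality :
    (∀ x : ℝ, Real.exp (x - x ^ 2 / 2) ≤ 1 + x + max (-x) 0 ^ 3 / 3) ∧
    (∀ {Ω : Type} {mΩ : MeasurableSpace Ω} (μ : Measure Ω) [IsProbabilityMeasure μ]
      (X : Ω → ℝ), Measurable X → Integrable X μ →
      Integrable (fun ω => |X ω| ^ 3) μ → (∫ ω, X ω ∂μ) = 0 →
      ∀ lam : ℝ, 0 ≤ lam →
        (∫ ω, Real.exp (lam * X ω - lam ^ 2 / 2 * X ω ^ 2) ∂μ)
          ≤ Real.exp (lam ^ 3 / 3 * ∫ ω, max (-X ω) 0 ^ 3 ∂μ)) := by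
  refine ⟨exp_sub_sq_half_le, fun μ _ X _ hX hX3 hmean lam hlam => ?_⟩
  calc ∫ ω, exp (lam * X ω - lam ^ 2 / 2 * X ω ^ 2) ∂μ
      ≤ 1 + lam ^ 3 / 3 * ∫ ω, max (-X ω) 0 ^ 3 ∂μ :=
        integral_exp_mul_sub_sq_half_le hX (integrable_negPart_pow_three hX.1 hX3) hmean hlam
    _ ≤ exp (lam ^ 3 / 3 * ∫ ω, max (-X ω) 0 ^ 3 ∂μ) := by
        linarith [add_one_le_exp (lam ^ 3 / 3 * ∫ ω, max (-X ω) 0 ^ 3 ∂μ)]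
end

section
/- exp(x − x²/6) ≤ 1 + x + x²/3 for all real x; consequently, for a martingale difference X with E X = 0 and E X² < ∞, E exp{λX − (λ²/6)X²} ≤ exp{(λ²/3)E X²} for all λ ∈ ℝ. -/
/-!
`F(x) = (1 + x + x²/3) · exp(−(x − x²/6))` has derivative `x³/9 · exp(−(x − x²/6))`, which has
the sign of `x`, so `F` is minimal at `0`, where it equals `1`; this is the pointwise inequality.
Applied at `λX` and integrated, it gives `E exp(λX − λ²X²/6) ≤ 1 + (λ²/3) E X² ≤ exp((λ²/3) E X²)`,
the linear term vanishing because `E X = 0`.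
-/

open MeasureTheory

theorem le_of_hasDerivAt_of_mul_deriv_nonneg {f f' : ℝ → ℝ} {a : ℝ}
    (hf : ∀ x, HasDerivAt f (f' x) x) (hsign : ∀ x, 0 ≤ (x - a) * f' x) (x : ℝ) :
    f a ≤ f x := by
  have hdiff : Differentiable ℝ f := fun y => (hf y).differentiableAt
  have hderiv : ∀ y, deriv f y = f' y := fun y => (hf y).deriv
  rcases le_total a x with hax | hxa
  · refine monotoneOn_of_deriv_nonneg (convex_Ici a) hdiff.continuous.continuousOn
      hdiff.differentiableOn (fun y hy => ?_) Set.self_mem_Ici hax hax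
    rw [interior_Ici] at hy
    rw [hderiv]
    exact nonneg_of_mul_nonneg_right (hsign y) (sub_pos.2 hy)
  · refine antitoneOn_of_deriv_nonpos (convex_Iic a) hdiff.continuous.continuousOn
      hdiff.differentiableOn (fun y hy => ?_) hxa Set.self_mem_Iic hxa
    rw [interior_Iic] at hy
    rw [hderiv]
    exact nonpos_of_mul_nonneg_right (hsign y) (sub_neg.2 hy)

theorem hasDerivAt_delyon (x : ℝ) :
    HasDerivAt (fun x => (1 + x + x ^ 2 / 3) * Real.exp (-(x - x ^ 2 / 6)))
      (x ^ 3 / 9 * Real.exp (-(x - x ^ 2 / 6))) x := by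
  have hpoly : HasDerivAt (fun x : ℝ => 1 + x + x ^ 2 / 3) (1 + 2 * x / 3) x :=
    (((hasDerivAt_id' x).const_add 1).fun_add ((hasDerivAt_pow 2 x).div_const 3)).congr_deriv
      (by norm_num)
  have hexp : HasDerivAt (fun x : ℝ => Real.exp (-(x - x ^ 2 / 6)))
      (Real.exp (-(x - x ^ 2 / 6)) * -(1 - 2 * x / 6)) x :=
    (((hasDerivAt_id' x).fun_sub ((hasDerivAt_pow 2 x).div_const 6)).neg.exp).congr_deriv
      (by norm_num)
  exact (hpoly.mul hexp).congr_deriv (by ring)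

theorem Real.exp_sub_sq_div_six_le (x : ℝ) : Real.exp (x - x ^ 2 / 6) ≤ 1 + x + x ^ 2 / 3 := by
  have hmin := le_of_hasDerivAt_of_mul_deriv_nonneg (a := 0) hasDerivAt_delyon
    (fun y => by
      rw [show (y - 0) * (y ^ 3 / 9 * Real.exp (-(y - y ^ 2 / 6)))
          = y ^ 4 / 9 * Real.exp (-(y - y ^ 2 / 6)) by ring]
      positivity) x
  rwa [show (1 + 0 + (0 : ℝ) ^ 2 / 3) * Real.exp (-(0 - 0 ^ 2 / 6)) = 1 by norm_num,
    Real.exp_neg, ← div_eq_mul_inv, one_le_div (Real.exp_pos _)] at hmin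

theorem integral_exp_sub_sq_div_six_le {Ω : Type*} {mΩ : MeasurableSpace Ω} {μ : Measure Ω}
    [IsProbabilityMeasure μ] {X : Ω → ℝ} (hX : Integrable X μ)
    (hX2 : Integrable (fun ω => X ω ^ 2) μ) (lam : ℝ) :
    ∫ ω, Real.exp (lam * X ω - lam ^ 2 / 6 * X ω ^ 2) ∂μ
      ≤ 1 + lam * ∫ ω, X ω ∂μ + lam ^ 2 / 3 * ∫ ω, X ω ^ 2 ∂μ := by
  have hlin : Integrable (fun ω => 1 + lam * X ω) μ := (integrable_const 1).add (hX.const_mul lam)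
  have hpointwise : ∀ ω, Real.exp (lam * X ω - lam ^ 2 / 6 * X ω ^ 2)
      ≤ 1 + lam * X ω + lam ^ 2 / 3 * X ω ^ 2 := fun ω => by
    convert Real.exp_sub_sq_div_six_le (lam * X ω) using 2 <;> ring
  calc ∫ ω, Real.exp (lam * X ω - lam ^ 2 / 6 * X ω ^ 2) ∂μ
      ≤ ∫ ω, (1 + lam * X ω + lam ^ 2 / 3 * X ω ^ 2) ∂μ :=
        integral_mono_of_nonneg (.of_forall fun ω => (Real.exp_pos _).le)
          (hlin.add (hX2.const_mul _)) (.of_forall hpointwise)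
    _ = 1 + lam * ∫ ω, X ω ∂μ + lam ^ 2 / 3 * ∫ ω, X ω ^ 2 ∂μ := by
        rw [integral_add hlin (hX2.const_mul _), integral_add (integrable_const 1)
          (hX.const_mul lam), integral_const, integral_const_mul, integral_const_mul]
        simp

/-- Delyon's inequality: `exp(x − x²/6) ≤ 1 + x + x²/3` for all real `x`;
consequently, for a mean-zero square-integrable random variable `X`,
`E exp(λX − (λ²/6)X²) ≤ exp((λ²/3) E X²)` for all `λ ∈ ℝ`. -/
theorem delyon_inequality :
    (∀ x : ℝ, Real.exp (x - x ^ 2 / 6) ≤ 1 + x + x ^ 2 / 3) ∧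
    (∀ {Ω : Type} {mΩ : MeasurableSpace Ω} (μ : Measure Ω) [IsProbabilityMeasure μ]
      (X : Ω → ℝ), Measurable X → Integrable X μ →
      Integrable (fun ω => X ω ^ 2) μ → (∫ ω, X ω ∂μ) = 0 →
      ∀ lam : ℝ,
        (∫ ω, Real.exp (lam * X ω - lam ^ 2 / 6 * X ω ^ 2) ∂μ)
          ≤ Real.exp (lam ^ 2 / 3 * ∫ ω, X ω ^ 2 ∂μ)) := by
  refine ⟨Real.exp_sub_sq_div_six_le, fun μ _ X _ hX hX2 hmean lam => ?_⟩
  calc (∫ ω, Real.exp (lam * X ω - lam ^ 2 / 6 * X ω ^ 2) ∂μ)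
      ≤ 1 + lam * ∫ ω, X ω ∂μ + lam ^ 2 / 3 * ∫ ω, X ω ^ 2 ∂μ :=
        integral_exp_sub_sq_div_six_le hX hX2 lam
    _ ≤ Real.exp (lam ^ 2 / 3 * ∫ ω, X ω ^ 2 ∂μ) := by
        rw [hmean, mul_zero, add_zero, add_comm]
        exact Real.add_one_le_exp _
end
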